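/- arXiv:1207.5308 — 3 statements merged into one kernel-verified Lean document; each statement's English description precedes it below -/
import Mathlib

section
/- Fix n ≥ 2, α with n+α even, σ with σ + 1/2 ∈ ℤ and σ̃ = σ + (n+α+1)/2 odd. Define, for (i,j) ∈ S(n) = {(i,j) : 0 ≤ i ≤ (n₁+1)/2, 0 ≤ j ≤ n₀/2} (n₀ the largest even integer ≤ n, n₁ the largest odd integer ≤ n), the set L_{i,j} of 2λ (λ ∈ Λ⁺_n) satisfying 2λ_{2i-1} ≥ B⁻_{2i-1} ≥ 2λ_{2i+1} and 2λ_{2j} ≥ B⁺_{2j+2} ≥ 2λ_{2j+2}, where B⁻_{2i-1} = σ - (n+α)/2 + 2i - 1/2 and B⁺_{2j+2} = -σ - (n+α)/2 + 2j + 1/2 (conditions involving out-of-range indices being vacuous, with λ_0 = +∞, λ_{n+1} = -∞). Then: if i - j ≤ -1, L_{i,j} ≠ ∅ iff i - j ≥ -σ + 1/2; in particular if σ ≤ -1/2 all such L_{i,j} are empty. -/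
/-!
Write `B⁻ᵢ = B⁻_{2i-1}` and `B⁺ⱼ = B⁺_{2j+2}` (`bMinus`, `bPlus` below). Since `2i + 1 < 2j`,
monotonicity of `λ` gives `B⁺ⱼ ≤ 2λ_{2j} ≤ 2λ_{2i+1} ≤ B⁻ᵢ`, and `B⁻ᵢ - B⁺ⱼ = 2(σ + i - j) - 1`:
this is the necessary condition. Conversely, the parity assumptions make `B⁻ᵢ` and `B⁺ⱼ` even
integers, so the step sequence equal to `B⁻ᵢ / 2` up to index `2i - 1` and to `B⁺ⱼ / 2` afterwards
lies in `L_{i,j}`.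
-/

/-- Membership of 2λ in L_{i,j} (Case 2a): λ ∈ Λ⁺_n (weakly decreasing on 1..n) and
2λ_{2i-1} ≥ B⁻_{2i-1} ≥ 2λ_{2i+1}, 2λ_{2j} ≥ B⁺_{2j+2} ≥ 2λ_{2j+2}, where
B⁻_{2i-1} = σ - (n+α)/2 + 2i - 1/2, B⁺_{2j+2} = -σ - (n+α)/2 + 2j + 1/2,
with conventions 2λ_0 = +∞, 2λ_{n+1} = -∞ (out-of-range conditions vacuous). -/
def LMem (n α : ℤ) (σ : ℝ) (i j : ℤ) (lam : ℤ → ℤ) : Prop :=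
  (∀ a b : ℤ, 1 ≤ a → a ≤ b → b ≤ n → lam b ≤ lam a) ∧
  ((1 ≤ 2 * i - 1 ∧ 2 * i - 1 ≤ n) →
    σ - ((n : ℝ) + α) / 2 + 2 * i - 1 / 2 ≤ 2 * lam (2 * i - 1)) ∧
  ((1 ≤ 2 * i + 1 ∧ 2 * i + 1 ≤ n) →
    (2 * lam (2 * i + 1) : ℝ) ≤ σ - ((n : ℝ) + α) / 2 + 2 * i - 1 / 2) ∧
  ((1 ≤ 2 * j ∧ 2 * j ≤ n) →
    -σ - ((n : ℝ) + α) / 2 + 2 * j + 1 / 2 ≤ 2 * lam (2 * j)) ∧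
  ((1 ≤ 2 * j + 2 ∧ 2 * j + 2 ≤ n) →
    (2 * lam (2 * j + 2) : ℝ) ≤ -σ - ((n : ℝ) + α) / 2 + 2 * j + 1 / 2)

noncomputable def bMinus (n α : ℤ) (σ : ℝ) (i : ℤ) : ℝ := σ - ((n : ℝ) + α) / 2 + 2 * i - 1 / 2

noncomputable def bPlus (n α : ℤ) (σ : ℝ) (j : ℤ) : ℝ := -σ - ((n : ℝ) + α) / 2 + 2 * j + 1 / 2

theorem bMinus_sub_bPlus (n α : ℤ) (σ : ℝ) (i j : ℤ) :
    bMinus n α σ i - bPlus n α σ j = 2 * (σ + i - j) - 1 := by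
  unfold bMinus bPlus; ring

theorem LMem.bPlus_le_bMinus {n α : ℤ} {σ : ℝ} {i j : ℤ} {lam : ℤ → ℤ}
    (h : LMem n α σ i j lam) (hi : 0 ≤ i) (hij : i < j) (hj : 2 * j ≤ n) :
    bPlus n α σ j ≤ bMinus n α σ i := by
  obtain ⟨hanti, -, hupper, hlower, -⟩ := h
  have hlam : (lam (2 * j) : ℝ) ≤ lam (2 * i + 1) := by
    exact_mod_cast hanti (2 * i + 1) (2 * j) (by omega) (by omega) hj
  calc bPlus n α σ j ≤ 2 * lam (2 * j) := hlower ⟨by omega, hj⟩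
    _ ≤ 2 * lam (2 * i + 1) := by linarith
    _ ≤ bMinus n α σ i := hupper ⟨by omega, by omega⟩

theorem LMem.neg_add_half_le_sub {n α : ℤ} {σ : ℝ} {i j : ℤ} {lam : ℤ → ℤ}
    (h : LMem n α σ i j lam) (hi : 0 ≤ i) (hij : i < j) (hj : 2 * j ≤ n) :
    -σ + 1 / 2 ≤ (i : ℝ) - j := by
  linarith [h.bPlus_le_bMinus hi hij hj, bMinus_sub_bPlus n α σ i j]

def stepSeq (k₀ a b : ℤ) (k : ℤ) : ℤ := if k ≤ k₀ then a else b

theorem stepSeq_antitone {k₀ a b : ℤ} (hba : b ≤ a) : Antitone (stepSeq k₀ a b) := by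
  intro k l hkl
  unfold stepSeq
  split_ifs <;> omega

theorem lMem_stepSeq {n α : ℤ} {σ : ℝ} {i j a b : ℤ} (hij : i ≤ j)
    (ha : bMinus n α σ i = 2 * a) (hb : bPlus n α σ j = 2 * b) (hba : b ≤ a) :
    LMem n α σ i j (stepSeq (2 * i - 1) a b) := by
  have hbaR : (b : ℝ) ≤ a := by exact_mod_cast hba
  unfold bMinus at ha
  unfold bPlus at hb
  refine ⟨fun k l _ hkl _ => stepSeq_antitone hba hkl, fun _ => ?_, fun _ => ?_,
    fun _ => ?_, fun _ => ?_⟩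
  · rw [stepSeq, if_pos le_rfl]; linarith
  all_goals rw [stepSeq, if_neg (by omega)]; linarith

theorem sigma_eq_of_parity {n α e t m : ℤ} {σ : ℝ} (he : n + α = e + e)
    (ht : σ + ((n : ℝ) + α + 1) / 2 = t) (hm : t = 2 * m + 1) :
    σ = 2 * m + 1 / 2 - e := by
  have heR : (n : ℝ) + α = e + e := by exact_mod_cast he
  have hmR : (t : ℝ) = 2 * m + 1 := by exact_mod_cast hm
  rw [heR, hmR] at ht
  linarith

theorem bMinus_eq_two_mul {n α e m : ℤ} {σ : ℝ} (he : n + α = e + e)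
    (hσ : σ = 2 * m + 1 / 2 - e) (i : ℤ) : bMinus n α σ i = 2 * (m - e + i : ℤ) := by
  have heR : (n : ℝ) + α = e + e := by exact_mod_cast he
  rw [bMinus, hσ, heR]; push_cast; ring

theorem bPlus_eq_two_mul {n α e m : ℤ} {σ : ℝ} (he : n + α = e + e)
    (hσ : σ = 2 * m + 1 / 2 - e) (j : ℤ) : bPlus n α σ j = 2 * (j - m : ℤ) := by
  have heR : (n : ℝ) + α = e + e := by exact_mod_cast he
  rw [bPlus, hσ, heR]; push_cast; ring

theorem stmt8_general (n α : ℤ) (heven : Even (n + α))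
    (σ : ℝ)
    (t : ℤ) (ht : σ + ((n : ℝ) + α + 1) / 2 = t) (htodd : Odd t)
    (i j : ℤ) (hi : 0 ≤ i ∧ i ≤ (n + 1) / 2) (hj : 0 ≤ j ∧ j ≤ n / 2)
    (hij : i - j ≤ -1) :
    ((∃ lam : ℤ → ℤ, LMem n α σ i j lam) ↔ -σ + 1 / 2 ≤ (i : ℝ) - j) ∧
    (σ ≤ -1 / 2 → ¬ ∃ lam : ℤ → ℤ, LMem n α σ i j lam) := by
  have hlt : i < j := by omega
  have h2j : 2 * j ≤ n := by omega
  have necessary : (∃ lam, LMem n α σ i j lam) → -σ + 1 / 2 ≤ (i : ℝ) - j :=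
    fun ⟨_, h⟩ => h.neg_add_half_le_sub hi.1 hlt h2j
  refine ⟨⟨necessary, fun hσij => ?_⟩, fun hσ hex => ?_⟩
  · obtain ⟨e, he⟩ := heven
    obtain ⟨m, hm⟩ := htodd
    have hσe := sigma_eq_of_parity he ht hm
    have hMinus := bMinus_eq_two_mul he hσe i
    have hPlus := bPlus_eq_two_mul he hσe j
    have hba : ((j - m : ℤ) : ℝ) ≤ (m - e + i : ℤ) := by
      linarith [bMinus_sub_bPlus n α σ i j]
    exact ⟨_, lMem_stepSeq hlt.le hMinus hPlus (by exact_mod_cast hba)⟩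
  · have : (i : ℝ) - j ≤ -1 := by exact_mod_cast hij
    linarith [necessary hex]

/-- Case 2a, part (i) of the combinatorial lemma: if (i,j) ∈ S(n) and
i - j ≤ -1 then L_{i,j} ≠ ∅ iff i - j ≥ -σ + 1/2; in particular if σ ≤ -1/2 then
all such L_{i,j} are empty. -/
theorem stmt8 (n α : ℤ) (hn : 2 ≤ n) (hα : 0 ≤ α ∧ α ≤ 3) (heven : Even (n + α))
    (σ : ℝ) (hσhalf : ∃ s : ℤ, σ + 1 / 2 = s)
    (t : ℤ) (ht : σ + ((n : ℝ) + α + 1) / 2 = t) (htodd : Odd t)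
    (i j : ℤ) (hi : 0 ≤ i ∧ i ≤ (n + 1) / 2) (hj : 0 ≤ j ∧ j ≤ n / 2)
    (hij : i - j ≤ -1) :
    ((∃ lam : ℤ → ℤ, LMem n α σ i j lam) ↔ -σ + 1 / 2 ≤ (i : ℝ) - j) ∧
    (σ ≤ -1 / 2 → ¬ ∃ lam : ℤ → ℤ, LMem n α σ i j lam) :=
  stmt8_general n α heven σ t ht htodd i j hi hj hij
end

section
/- In the setting of Case 2a (n+α even, σ + 1/2 ∈ ℤ, σ̃ odd), if (i,j) ∈ S(n) and i - j ≥ 2, then L_{i,j} ≠ ∅ if and only if i - j ≤ -σ + 1/2; in particular if σ ≥ 1/2 then all such L_{i,j} are empty. -/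
/-!
Write `B⁻ = σ - (n+α)/2 + 2i - 1/2` and `B⁺ = -σ - (n+α)/2 + 2j + 1/2`, so that
`B⁺ - B⁻ = 2(-σ + 1/2 - (i - j))`. Since `i - j ≥ 2` puts the index `2j + 2` before `2i - 1`,
monotonicity of `λ` gives `B⁻ ≤ 2λ_{2i-1} ≤ 2λ_{2j+2} ≤ B⁺`. Conversely, with
`σ̃ = σ + (n+α+1)/2` odd, `B⁺ = 2j + 1 - σ̃` is even, and the step function equal to `B⁺/2`
up to the index `2i - 1` and to `⌊B⁻/2⌋` after it lies in `L_{i,j}` as soon as `B⁻ ≤ B⁺`.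
-/

theorem LMem.sub_le {n α : ℤ} {σ : ℝ} {i j : ℤ} {lam : ℤ → ℤ} (h : LMem n α σ i j lam)
    (hj : 0 ≤ j) (hij : j + 2 ≤ i) (hin : 2 * i - 1 ≤ n) : (i : ℝ) - j ≤ -σ + 1 / 2 := by
  obtain ⟨hanti, hlow, -, -, hhigh⟩ := h
  have hmono : (lam (2 * i - 1) : ℝ) ≤ lam (2 * j + 2) := by
    exact_mod_cast hanti _ _ (by omega) (by omega) hin
  linarith [hlow ⟨by omega, hin⟩, hhigh ⟨by omega, by omega⟩]

theorem exists_lMem_of_sub_le {n α : ℤ} {σ : ℝ} {i j A : ℤ}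
    (hA : -σ - ((n : ℝ) + α) / 2 + 2 * j + 1 / 2 = 2 * A) (hij : j + 2 ≤ i)
    (hle : (i : ℝ) - j ≤ -σ + 1 / 2) : ∃ lam : ℤ → ℤ, LMem n α σ i j lam := by
  set C := ⌊(σ - ((n : ℝ) + α) / 2 + 2 * i - 1 / 2) / 2⌋
  have hC : (2 * C : ℝ) ≤ σ - ((n : ℝ) + α) / 2 + 2 * i - 1 / 2 := by
    linarith [Int.floor_le ((σ - ((n : ℝ) + α) / 2 + 2 * i - 1 / 2) / 2)]
  have hCA : C ≤ A := Int.floor_le_iff.mpr (by linarith)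
  refine ⟨fun k => if k ≤ 2 * i - 1 then A else C, ?_, ?_, ?_, ?_, ?_⟩
  · intro a b _ hab _
    dsimp only
    split_ifs <;> omega
  · intro _
    simp only [le_refl, if_true]
    linarith
  · intro _
    simp only [show ¬ 2 * i + 1 ≤ 2 * i - 1 by omega, if_false]
    exact hC
  · intro _
    simp only [show 2 * j ≤ 2 * i - 1 by omega, if_true]
    linarith
  · intro _
    simp only [show 2 * j + 2 ≤ 2 * i - 1 by omega, if_true]
    linarith

theorem stmt10_general (n α : ℤ) (σ : ℝ) (t : ℤ) (ht : σ + ((n : ℝ) + α + 1) / 2 = t) (htodd : Odd t)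
    (i j : ℤ) (hi : 0 ≤ i ∧ i ≤ (n + 1) / 2) (hj : 0 ≤ j ∧ j ≤ n / 2)
    (hij : 2 ≤ i - j) :
    ((∃ lam : ℤ → ℤ, LMem n α σ i j lam) ↔ (i : ℝ) - j ≤ -σ + 1 / 2) ∧
    (1 / 2 ≤ σ → ¬ ∃ lam : ℤ → ℤ, LMem n α σ i j lam) := by
  obtain ⟨u, rfl⟩ := htodd
  have hB : -σ - ((n : ℝ) + α) / 2 + 2 * j + 1 / 2 = 2 * (j - u : ℤ) := by
    push_cast at ht ⊢
    linarith
  have key : (∃ lam : ℤ → ℤ, LMem n α σ i j lam) ↔ (i : ℝ) - j ≤ -σ + 1 / 2 :=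
    ⟨fun ⟨_, h⟩ => h.sub_le hj.1 (by omega) (by omega), exists_lMem_of_sub_le hB (by omega)⟩
  refine ⟨key, fun hσ hex => ?_⟩
  have hij' : (2 : ℝ) ≤ i - j := by exact_mod_cast hij
  linarith [key.mp hex]

/-- Case 2a: if (i,j) ∈ S(n) and i - j ≥ 2, then L_{i,j} ≠ ∅ iff
i - j ≤ -σ + 1/2; in particular if σ ≥ 1/2 then all such L_{i,j} are empty. -/
theorem stmt10 (n α : ℤ) (hn : 2 ≤ n) (hα : 0 ≤ α ∧ α ≤ 3) (heven : Even (n + α))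
    (σ : ℝ) (hσhalf : ∃ s : ℤ, σ + 1 / 2 = s)
    (t : ℤ) (ht : σ + ((n : ℝ) + α + 1) / 2 = t) (htodd : Odd t)
    (i j : ℤ) (hi : 0 ≤ i ∧ i ≤ (n + 1) / 2) (hj : 0 ≤ j ∧ j ≤ n / 2)
    (hij : 2 ≤ i - j) :
    ((∃ lam : ℤ → ℤ, LMem n α σ i j lam) ↔ (i : ℝ) - j ≤ -σ + 1 / 2) ∧
    (1 / 2 ≤ σ → ¬ ∃ lam : ℤ → ℤ, LMem n α σ i j lam) :=
  stmt10_general n α σ t ht htodd i j hi hj hij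
end

section
/- For the metaplectic degenerate principal series I^α(σ) with transition coefficients A_j⁺(μ) = B_j⁺ - 2λ_j and A_j⁻(μ) = 2λ_j - B_j⁻, where B_j⁺ = -σ - ρ_n - α/2 + j - 1 and B_j⁻ = σ - ρ_n - α/2 + j + 1 and μ = 2λ + (α/2)·𝟏: all transition coefficients A_j^±(μ) are nonzero for all λ ∈ Λ⁺_n and all 1 ≤ j ≤ n if and only if σ + ρ_n + α/2 ∉ ℤ. (Here ρ_n = (n+1)/2.) -/
/-!
With `s = σ + ρ_n + α/2`, the coefficients are `A⁺_j = (j - 1 - 2λ_j) - s` and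
`A⁻_j = (2λ_j + n + α - j) - s`, so a vanishing coefficient exhibits `s` as an integer.
Conversely every integer is `j - 1 - 2c` with `j ∈ {1, 2} ⊆ [1, n]`, and the constant
tuple `λ = c` makes `A⁺_j` vanish.
-/

section TransitionCoefficients

variable (n α j l : ℤ) (σ : ℂ)

lemma plus_coeff_eq_int_sub :
    (-σ - ((n : ℂ) + 1) / 2 - (α : ℂ) / 2 + j - 1) - 2 * l =
      ((j - 1 - 2 * l : ℤ) : ℂ) - (σ + ((n : ℂ) + 1) / 2 + (α : ℂ) / 2) := by
  push_cast
  ring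

lemma minus_coeff_eq_int_sub :
    2 * (l : ℂ) - (σ - ((n : ℂ) + 1) / 2 - (α : ℂ) / 2 + j + 1) =
      ((2 * l + n + α - j : ℤ) : ℂ) - (σ + ((n : ℂ) + 1) / 2 + (α : ℂ) / 2) := by
  push_cast
  ring

end TransitionCoefficients

theorem stmt16_general (n α : ℤ) (hn : 2 ≤ n) (σ : ℂ) :
    (∀ lam : ℤ → ℤ, (∀ a b : ℤ, 1 ≤ a → a ≤ b → b ≤ n → lam b ≤ lam a) →
      ∀ j : ℤ, 1 ≤ j → j ≤ n →
        ((-σ - ((n : ℂ) + 1) / 2 - (α : ℂ) / 2 + j - 1) - 2 * lam j ≠ 0 ∧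
          2 * (lam j : ℂ) - (σ - ((n : ℂ) + 1) / 2 - (α : ℂ) / 2 + j + 1) ≠ 0)) ↔
    ¬ ∃ k : ℤ, σ + ((n : ℂ) + 1) / 2 + (α : ℂ) / 2 = k := by
  constructor
  · rintro h ⟨k, hk⟩
    obtain ⟨j, c, hj1, hj2, rfl⟩ : ∃ j c : ℤ, 1 ≤ j ∧ j ≤ 2 ∧ k = j - 1 - 2 * c :=
      ⟨k % 2 + 1, -(k / 2), by omega, by omega, by omega⟩
    refine (h (fun _ => c) (fun _ _ _ _ _ => le_rfl) j hj1 (hj2.trans hn)).1 ?_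
    rw [plus_coeff_eq_int_sub, hk, sub_self]
  · rintro h lam - j - -
    rw [plus_coeff_eq_int_sub, minus_coeff_eq_int_sub, sub_ne_zero, sub_ne_zero]
    exact ⟨fun he => h ⟨_, he.symm⟩, fun he => h ⟨_, he.symm⟩⟩

/-- the transition coefficients A⁺_j(μ) = B⁺_j - 2λ_j and
A⁻_j(μ) = 2λ_j - B⁻_j, with B⁺_j = -σ - ρ_n - α/2 + j - 1, B⁻_j = σ - ρ_n - α/2 + j + 1,
ρ_n = (n+1)/2, are all nonzero (for all λ ∈ Λ⁺_n and 1 ≤ j ≤ n) iff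
σ + ρ_n + α/2 ∉ ℤ (the Kudla–Rallis irreducibility criterion). -/
theorem stmt16 (n α : ℤ) (hn : 2 ≤ n) (hα : 0 ≤ α ∧ α ≤ 3) (σ : ℂ) :
    (∀ lam : ℤ → ℤ, (∀ a b : ℤ, 1 ≤ a → a ≤ b → b ≤ n → lam b ≤ lam a) →
      ∀ j : ℤ, 1 ≤ j → j ≤ n →
        ((-σ - ((n : ℂ) + 1) / 2 - (α : ℂ) / 2 + j - 1) - 2 * lam j ≠ 0 ∧
          2 * (lam j : ℂ) - (σ - ((n : ℂ) + 1) / 2 - (α : ℂ) / 2 + j + 1) ≠ 0)) ↔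
    ¬ ∃ k : ℤ, σ + ((n : ℂ) + 1) / 2 + (α : ℂ) / 2 = k :=
  stmt16_general n α hn σ
end
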